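/- arXiv:math/0412110 — 2 statements merged into one kernel-verified Lean document; each statement's English description precedes it below -/
import Mathlib

section
/- Let (D, ∂) be a cochain complex of finite-dimensional vector spaces over a field with integers s ≤ t such that t - s is even. Then χ_{s,t}(H(D,∂)) ≤ χ_{s,t}(D) ≤ χ_{s,t}(H(D,∂)) + min(dim D^{s-1}, dim D^s) + min(dim D^t, dim D^{t+1}). -/
open Module

/-- Dimension of the cohomology of the complex `(D, d)` at degree `i`:
`H^i = (D^i ∩ ker d) / d(D^{i-1})`. -/
noncomputable def cohomDim {K M : Type*} [Field K] [AddCommGroup M] [Module K M]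
    (D : ℤ → Submodule K M) (d : M →ₗ[K] M) (i : ℤ) : ℕ :=
  Module.finrank K
    ((↥(D i ⊓ LinearMap.ker d)) ⧸
      (((D (i - 1)).map d).comap (D i ⊓ LinearMap.ker d).subtype))

/-- Telescoping alternating sum, ℕ version. -/
lemma telescope_aux (f : ℤ → ℤ) (s : ℤ) (n : ℕ) :
    (∑ i ∈ Finset.Icc s (s + (n : ℤ)), (-1 : ℤ) ^ (i - s).toNat * (f i + f (i + 1)))
      = f s + (-1 : ℤ) ^ n * f (s + (n : ℤ) + 1) := by
  induction n with
  | zero => simp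
  | succ n ih =>
    have hins : Finset.Icc s (s + ((n + 1 : ℕ) : ℤ))
        = insert (s + (n : ℤ) + 1) (Finset.Icc s (s + (n : ℤ))) := by
      ext x
      simp only [Finset.mem_Icc, Finset.mem_insert]
      push_cast
      omega
    have hnotmem : s + (n : ℤ) + 1 ∉ Finset.Icc s (s + (n : ℤ)) := by
      simp only [Finset.mem_Icc]
      omega
    have he : ((s + (n : ℤ) + 1) - s).toNat = n + 1 := by omega
    rw [hins, Finset.sum_insert hnotmem, ih, he, pow_succ]
    push_cast
    ring

/-- Telescoping alternating sum. -/
lemma telescope (f : ℤ → ℤ) (s t : ℤ) (hst : s ≤ t) :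
    (∑ i ∈ Finset.Icc s t, (-1 : ℤ) ^ (i - s).toNat * (f i + f (i + 1)))
      = f s + (-1 : ℤ) ^ (t - s).toNat * f (t + 1) := by
  have h := telescope_aux f s (t - s).toNat
  have hts : s + (((t - s).toNat : ℕ) : ℤ) = t := by omega
  rw [hts] at h
  exact h

/-- For `t - s` even:
χ_{s,t}(H) ≤ χ_{s,t}(D) ≤ χ_{s,t}(H) + min(dim D^{s-1}, dim D^s) + min(dim D^t, dim D^{t+1}). -/
theorem stmt1 {K M : Type*} [Field K] [AddCommGroup M] [Module K M]
    (D : ℤ → Submodule K M) (d : M →ₗ[K] M)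
    (hdeg : ∀ i : ℤ, (D i).map d ≤ D (i + 1))
    (hsq : ∀ i : ℤ, ∀ x ∈ D i, d (d x) = 0)
    (hfd : ∀ i : ℤ, FiniteDimensional K (D i))
    (s t : ℤ) (hst : s ≤ t) (heven : Even (t - s)) :
    (∑ i ∈ Finset.Icc s t, (-1 : ℤ) ^ (i - s).toNat * (cohomDim D d i : ℤ))
        ≤ (∑ i ∈ Finset.Icc s t, (-1 : ℤ) ^ (i - s).toNat * (Module.finrank K (D i) : ℤ))
      ∧ (∑ i ∈ Finset.Icc s t, (-1 : ℤ) ^ (i - s).toNat * (Module.finrank K (D i) : ℤ))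
        ≤ (∑ i ∈ Finset.Icc s t, (-1 : ℤ) ^ (i - s).toNat * (cohomDim D d i : ℤ))
          + (min (Module.finrank K (D (s - 1))) (Module.finrank K (D s)) : ℤ)
          + (min (Module.finrank K (D t)) (Module.finrank K (D (t + 1))) : ℤ) := by
  -- Notation: z i = dim (D i ∩ ker d), b i = dim d(D i) (living in degree i+1)
  haveI := hfd
  -- boundaries land in cycles
  have hBZ : ∀ i : ℤ, (D (i - 1)).map d ≤ D i ⊓ LinearMap.ker d := by
    intro i
    refine le_inf ?_ ?_
    · have := hdeg (i - 1); simpa using this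
    · rintro _ ⟨x, hx, rfl⟩
      exact hsq (i - 1) x hx
  -- rank-nullity: dim D i = z i + b i
  have hrn : ∀ i : ℤ, finrank K (D i)
      = finrank K (D i ⊓ LinearMap.ker d : Submodule K M)
        + finrank K ((D i).map d : Submodule K M) := by
    intro i
    have h := LinearMap.finrank_range_add_finrank_ker (d.domRestrict (D i))
    rw [LinearMap.range_domRestrict, LinearMap.ker_domRestrict] at h
    have hker : Submodule.comap (D i).subtype (LinearMap.ker d)
        = Submodule.comap (D i).subtype (D i ⊓ LinearMap.ker d) := by
      rw [Submodule.comap_inf, Submodule.comap_subtype_self, top_inf_eq]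
    rw [hker] at h
    have e := Submodule.comapSubtypeEquivOfLe
      (inf_le_left : D i ⊓ LinearMap.ker d ≤ D i)
    rw [e.finrank_eq] at h
    omega
  -- cohomology: z i = h i + b (i-1)
  have hcoh : ∀ i : ℤ, finrank K (D i ⊓ LinearMap.ker d : Submodule K M)
      = cohomDim D d i + finrank K ((D (i - 1)).map d : Submodule K M) := by
    intro i
    haveI : FiniteDimensional K (D i ⊓ LinearMap.ker d : Submodule K M) :=
      Submodule.finiteDimensional_of_le (inf_le_left : D i ⊓ LinearMap.ker d ≤ D i)
    have h := Submodule.finrank_quotient_add_finrank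
      ((((D (i - 1)).map d).comap (D i ⊓ LinearMap.ker d).subtype))
    have e := Submodule.comapSubtypeEquivOfLe (hBZ i)
    rw [e.finrank_eq] at h
    unfold cohomDim
    omega
  -- combining: dim D i = h i + b (i-1) + b i
  have hkey : ∀ i : ℤ, (finrank K (D i) : ℤ)
      = (cohomDim D d i : ℤ) + ((finrank K ((D (i - 1)).map d : Submodule K M) : ℤ)
        + (finrank K ((D i).map d : Submodule K M) : ℤ)) := by
    intro i
    have h1 := hrn i
    have h2 := hcoh i
    push_cast [h1, h2]
    ring
  set b : ℤ → ℤ := fun i => (finrank K ((D (i - 1)).map d : Submodule K M) : ℤ) with hb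
  have hsum : (∑ i ∈ Finset.Icc s t, (-1 : ℤ) ^ (i - s).toNat * (finrank K (D i) : ℤ))
      = (∑ i ∈ Finset.Icc s t, (-1 : ℤ) ^ (i - s).toNat * (cohomDim D d i : ℤ))
        + (b s + (-1 : ℤ) ^ (t - s).toNat * b (t + 1)) := by
    rw [← telescope b s t hst, ← Finset.sum_add_distrib]
    refine Finset.sum_congr rfl fun i _ => ?_
    have : b (i + 1) = (finrank K ((D i).map d : Submodule K M) : ℤ) := by
      simp only [hb]
      rw [show i + 1 - 1 = i from by ring]
    rw [← mul_add, hkey i, this, hb]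
  have hpow : (-1 : ℤ) ^ (t - s).toNat = 1 := by
    apply Even.neg_one_pow
    obtain ⟨k, hk⟩ := heven
    exact ⟨k.toNat, by omega⟩
  rw [hpow, one_mul] at hsum
  have hb_nonneg : ∀ i, 0 ≤ b i := fun i => Int.natCast_nonneg _
  have hb_le : ∀ i : ℤ, b i ≤ min (finrank K (D (i - 1))) (finrank K (D i)) := by
    intro i
    have h1 : finrank K ((D (i - 1)).map d : Submodule K M) ≤ finrank K (D (i - 1)) :=
      Submodule.finrank_map_le d (D (i - 1))
    have h2 : finrank K ((D (i - 1)).map d : Submodule K M) ≤ finrank K (D i) := by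
      apply Submodule.finrank_mono
      have := hdeg (i - 1); simpa using this
    simp only [hb]
    exact_mod_cast le_min h1 h2
  constructor
  · rw [hsum]
    have hn1 := hb_nonneg s
    have hn2 := hb_nonneg (t + 1)
    omega
  · rw [hsum]
    have h1 := hb_le s
    have h2 := hb_le (t + 1)
    rw [show t + 1 - 1 = t from by ring] at h2
    omega
end

section
/- Let n ≥ 3 and let (V^i)_{i ∈ ℤ} be finite-dimensional ℤ₂-vector spaces with V^i = 0 for i < 0 and i > n+1, dim V^0 = dim V^{n+1} = 1. Suppose there are linear maps f_q : V^{q+n} → V^q for all q ∈ ℤ such that ⋯ → V^{q+n} → V^q → V^{q-n} → ⋯ is exact at every V^q. Then V^1 ≅ V^{n+1} ≅ ℤ₂, V^n ≅ V^0 ≅ ℤ₂, and V^i = 0 for every 1 < i < n. -/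
open Module

private lemma finrank_map_eq_of_disjoint {M : Type*} [AddCommGroup M] [Module (ZMod 2) M]
    (p : Submodule (ZMod 2) M) [FiniteDimensional (ZMod 2) p] (f : M →ₗ[ZMod 2] M)
    (h : p ⊓ LinearMap.ker f = ⊥) :
    Module.finrank (ZMod 2) (p.map f) = Module.finrank (ZMod 2) p := by
  have hker : LinearMap.ker (f.domRestrict p) = ⊥ := by
    rw [Submodule.eq_bot_iff]
    intro x hx
    have : (x : M) ∈ p ⊓ LinearMap.ker f := ⟨x.2, by simpa using hx⟩
    rw [h] at this
    exact Subtype.ext (by simpa using this)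
  have := LinearMap.finrank_range_add_finrank_ker (f.domRestrict p)
  rw [hker, finrank_bot, add_zero, LinearMap.range_domRestrict] at this
  exact this

/-- Exact-sequence computation with degree shift `n`, support in `[0, n+1]`,
`dim V^0 = dim V^{n+1} = 1`: then `dim V^1 = dim V^n = 1` and `V^i = 0` for `1 < i < n`. -/
theorem stmt11 (n : ℕ) (hn : 3 ≤ n)
    {M : Type*} [AddCommGroup M] [Module (ZMod 2) M]
    (V : ℤ → Submodule (ZMod 2) M) (hint : DirectSum.IsInternal V)
    (hfd : ∀ i, FiniteDimensional (ZMod 2) (V i))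
    (hneg : ∀ i : ℤ, i < 0 → V i = ⊥)
    (hbig : ∀ i : ℤ, (n : ℤ) + 1 < i → V i = ⊥)
    (h0 : Module.finrank (ZMod 2) (V 0) = 1)
    (htop : Module.finrank (ZMod 2) (V ((n : ℤ) + 1)) = 1)
    (f : M →ₗ[ZMod 2] M)
    (hexact : ∀ q : ℤ, (V (q + (n : ℤ))).map f = V q ⊓ LinearMap.ker f) :
    Module.finrank (ZMod 2) (V 1) = 1 ∧
      Module.finrank (ZMod 2) (V (n : ℤ)) = 1 ∧
      (∀ i : ℤ, 1 < i → i < (n : ℤ) → V i = ⊥) := by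
  have hn' : (3 : ℤ) ≤ n := by exact_mod_cast hn
  -- general: if q > 1 then V (q+n) = ⊥ so V q ⊓ ker f = ⊥
  have hdisj : ∀ q : ℤ, 1 < q → V q ⊓ LinearMap.ker f = ⊥ := by
    intro q hq
    have h := hexact q
    rw [hbig (q + n) (by omega), Submodule.map_bot] at h
    exact h.symm
  -- general: if q < n then V q ≤ ker f
  have hsub : ∀ q : ℤ, q < n → V q ≤ LinearMap.ker f := by
    intro q hq
    have h := hexact (q - n)
    rw [show q - (n : ℤ) + n = q by ring] at h
    intro x hx
    have : f x ∈ V (q - n) ⊓ LinearMap.ker f := h ▸ Submodule.mem_map_of_mem hx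
    rw [hneg (q - n) (by omega)] at this
    simpa using this.1
  haveI := hfd ((n : ℤ) + 1)
  haveI := hfd (n : ℤ)
  refine ⟨?_, ?_, ?_⟩
  · -- V 1
    have h1 := hexact 1
    have hV1ker : V 1 ⊓ LinearMap.ker f = V 1 :=
      inf_eq_left.mpr (hsub 1 (by omega))
    rw [hV1ker] at h1
    rw [← h1, show (1 : ℤ) + n = n + 1 by ring,
      finrank_map_eq_of_disjoint _ f (hdisj ((n : ℤ) + 1) (by omega))]
    exact htop
  · -- V n
    have h0' := hexact 0
    have hV0ker : V 0 ⊓ LinearMap.ker f = V 0 :=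
      inf_eq_left.mpr (hsub 0 (by omega))
    rw [hV0ker, show (0 : ℤ) + n = n by ring] at h0'
    rw [← finrank_map_eq_of_disjoint _ f (hdisj (n : ℤ) (by omega)), h0']
    exact h0
  · intro i h1 h2
    have := hdisj i h1
    rw [inf_eq_left.mpr (hsub i h2)] at this
    exact this
end
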